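/- There exist constants C, d > 0 such that for all integers n, m ≥ 2, the approximate degree of the boolean function h̃_{1,n,m} associated to h_{1,n,m} satisfies adeg(h̃_{1,n,m}) ≤ C·(√n + √m)·(log₂(nm))^d. -/

import Mathlib

open Classical
open scoped ENNReal

set_option maxHeartbeats 1000000

/-! ### Deterministic decision trees -/

inductive DTree (ι σ : Type) : Type
  | leaf (b : Bool) : DTree ι σ
  | node (v : ι) (child : σ → DTree ι σ) : DTree ι σ

namespace DTree

variable {ι σ : Type}

/-- The output of the decision tree on input `x`. -/
def eval (x : ι → σ) : DTree ι σ → Bool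
  | leaf b => b
  | node v child => (child (x v)).eval x

/-- The list of variables queried by the decision tree on input `x`,
in the order they are queried. -/
def queryList (x : ι → σ) : DTree ι σ → List ι
  | leaf _ => []
  | node v child => v :: (child (x v)).queryList x

/-- The cost of the decision tree on input `x`: the number of internal nodes visited. -/
def cost (T : DTree ι σ) (x : ι → σ) : ℕ := (T.queryList x).length

/-- `T` computes `f` if it outputs `f x` on every input `x`. -/
def Computes (T : DTree ι σ) (f : (ι → σ) → Bool) : Prop := ∀ x, T.eval x = f x

end DTree

/-- Deterministic query complexity. -/
noncomputable def detComplexity {ι σ : Type} (f : (ι → σ) → Bool) : ℕ :=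
  sInf {d : ℕ | ∃ T : DTree ι σ, T.Computes f ∧ ∀ x, T.cost x ≤ d}

/-- Expected cost of a randomized decision tree (a distribution over deterministic
decision trees) on input `x`. -/
noncomputable def expCost {ι σ : Type} (μ : PMF (DTree ι σ)) (x : ι → σ) : ℝ≥0∞ :=
  ∑' T : DTree ι σ, μ T * (T.cost x : ℝ≥0∞)

/-- Zero-error (Las Vegas) randomized query complexity. -/
noncomputable def R0query {ι σ : Type} (f : (ι → σ) → Bool) : ℝ≥0∞ :=
  ⨅ μ ∈ {μ : PMF (DTree ι σ) | ∀ T ∈ μ.support, T.Computes f},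
    ⨆ x : ι → σ, expCost μ x

/-- One-sided error randomized query complexity. -/
noncomputable def R1query {ι σ : Type} (f : (ι → σ) → Bool) : ℝ≥0∞ :=
  ⨅ μ ∈ {μ : PMF (DTree ι σ) |
      (∀ x, f x = false → ∀ T ∈ μ.support, T.eval x = false) ∧
      (∀ x, f x = true → 1 / 2 ≤ ∑' T : DTree ι σ, if T.eval x = true then μ T else 0)},
    ⨆ x : ι → σ, expCost μ x

/-- Bounded-error (Monte Carlo) randomized query complexity. -/
noncomputable def Rquery {ι σ : Type} (f : (ι → σ) → Bool) : ℝ≥0∞ :=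
  ⨅ μ ∈ {μ : PMF (DTree ι σ) |
      ∀ x, 9 / 10 ≤ ∑' T : DTree ι σ, if T.eval x = f x then μ T else 0},
    ⨆ x : ι → σ, expCost μ x
/-! ### Quantum query algorithms -/

/-- The standard quantum query oracle `O_x |j,p⟩|w⟩ = |j, p + x_j mod S⟩|w⟩`,
as a matrix. -/
noncomputable def qOracle {V ω : Type} [DecidableEq V] [DecidableEq ω] {S : ℕ}
    (x : V → Fin S) : Matrix (V × Fin S × ω) (V × Fin S × ω) ℂ :=
  fun r c => if r = (c.1, c.2.1 + x c.1, c.2.2) then 1 else 0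

/-- A quantum query algorithm on inputs `x : V → Fin S`, making `queries` queries, with
workspace `Fin (W+1)`, alternating the unitaries `U 0, …, U queries` with the oracle,
and measuring with the projector `P` at the end. -/
structure QAlg (V : Type) [Fintype V] [DecidableEq V] (S : ℕ) [NeZero S] where
  queries : ℕ
  W : ℕ
  init : V
  U : ℕ → Matrix (V × Fin S × Fin (W + 1)) (V × Fin S × Fin (W + 1)) ℂ
  hU : ∀ t, (U t).conjTranspose * U t = 1 ∧ U t * (U t).conjTranspose = 1
  P : Matrix (V × Fin S × Fin (W + 1)) (V × Fin S × Fin (W + 1)) ℂ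
  hP : P.conjTranspose = P ∧ P * P = P

namespace QAlg

variable {V : Type} [Fintype V] [DecidableEq V] {S : ℕ} [NeZero S]

/-- The state of the quantum algorithm after `t` steps on input `x`. -/
noncomputable def state (A : QAlg V S) (x : V → Fin S) :
    ℕ → (V × Fin S × Fin (A.W + 1) → ℂ)
  | 0 => (A.U 0).mulVec fun r => if r = (A.init, 0, 0) then 1 else 0
  | t + 1 => (A.U (t + 1)).mulVec ((qOracle x).mulVec (A.state x t))

/-- The probability that the algorithm accepts input `x`: `‖P |Ψ_x⟩‖²`. -/
noncomputable def acceptProb (A : QAlg V S) (x : V → Fin S) : ℝ :=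
  ∑ r : V × Fin S × Fin (A.W + 1), Complex.normSq (A.P.mulVec (A.state x A.queries) r)

end QAlg

/-- Bounded-error quantum query complexity (for functions over a finite input
alphabet `σ`, identified with `Fin (card σ)` via a fixed bijection). -/
noncomputable def Qquery {V σ : Type} [Fintype V] [DecidableEq V] [Fintype σ] [Nonempty σ]
    (f : (V → σ) → Bool) : ℕ :=
  letI : NeZero (Fintype.card σ) := ⟨Fintype.card_ne_zero⟩
  sInf {t : ℕ | ∃ A : QAlg V (Fintype.card σ), A.queries = t ∧
    ∀ x : V → σ,
      (f x = true → 9 / 10 ≤ A.acceptProb fun j => Fintype.equivFin σ (x j)) ∧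
      (f x = false → A.acceptProb (fun j => Fintype.equivFin σ (x j)) ≤ 1 / 10)}

/-- Exact quantum query complexity. -/
noncomputable def QEquery {V σ : Type} [Fintype V] [DecidableEq V] [Fintype σ] [Nonempty σ]
    (f : (V → σ) → Bool) : ℕ :=
  letI : NeZero (Fintype.card σ) := ⟨Fintype.card_ne_zero⟩
  sInf {t : ℕ | ∃ A : QAlg V (Fintype.card σ), A.queries = t ∧
    ∀ x : V → σ,
      (f x = true → A.acceptProb (fun j => Fintype.equivFin σ (x j)) = 1) ∧
      (f x = false → A.acceptProb (fun j => Fintype.equivFin σ (x j)) = 0)}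

/-- Approximate degree of a boolean function. -/
noncomputable def adeg {ι : Type} (F : (ι → Bool) → Bool) : ℕ :=
  sInf {d : ℕ | ∃ p : MvPolynomial ι ℝ, p.totalDegree ≤ d ∧
    ∀ y : ι → Bool, |MvPolynomial.eval (fun i => if y i then (1 : ℝ) else 0) p -
      (if F y then 1 else 0)| ≤ 1 / 10}
/-! ### The pointer functions of Göös–Pitassi–Watson type -/

/-- A symbol of the input alphabet: a boolean value, a left pointer, a right pointer,
and a back/internal pointer (to a cell or a column, depending on `β`). -/
structure PSym (n m : ℕ) (β : Type) where
  val : Bool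
  lp : Option (Fin n × Fin m)
  rp : Option (Fin n × Fin m)
  bp : Option β
deriving DecidableEq

/-- The all-ones symbol `(1,⊥,⊥,⊥)`. -/
def PSym.one (n m : ℕ) (β : Type) : PSym n m β := ⟨true, none, none, none⟩

/-- The symbol `(0,⊥,⊥,⊥)`. -/
def PSym.zero (n m : ℕ) (β : Type) : PSym n m β := ⟨false, none, none, none⟩

def PSym.equivProd (n m : ℕ) (β : Type) :
    PSym n m β ≃ Bool × Option (Fin n × Fin m) × Option (Fin n × Fin m) × Option β where
  toFun v := (v.val, v.lp, v.rp, v.bp)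
  invFun p := ⟨p.1, p.2.1, p.2.2.1, p.2.2.2⟩
  left_inv _ := rfl
  right_inv _ := rfl

instance {n m : ℕ} {β : Type} [Fintype β] : Fintype (PSym n m β) :=
  Fintype.ofEquiv _ (PSym.equivProd n m β).symm

instance {n m : ℕ} {β : Type} : Nonempty (PSym n m β) := ⟨PSym.one n m β⟩

/-- The sequence of k bits of `j`, most significant first:  the root-to-leaf path
(`false` = left, `true` = right) of the `j`-th leaf in the complete binary tree of depth `k`. -/
def bitsPath (k j : ℕ) : List Bool :=
  ((List.range k).reverse).map fun i => j.testBit i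

/-- The root-to-leaf path of the leaf labeled `j` (0-indexed) in the balanced binary tree
with `m` leaves: the complete binary tree if `m` is a power of 2, and otherwise the complete
binary tree on `2 ^ ⌊log₂ m⌋` leaves with a pair of children added to each of the
`m - 2 ^ ⌊log₂ m⌋` leftmost leaves. -/
def treePath (m j : ℕ) : List Bool :=
  if m - 2 ^ Nat.log 2 m = 0 then bitsPath (Nat.log 2 m) j
  else if j < 2 * (m - 2 ^ Nat.log 2 m) then
    bitsPath (Nat.log 2 m) (j / 2) ++ [j % 2 == 1]
  else bitsPath (Nat.log 2 m) (j - (m - 2 ^ Nat.log 2 m))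

/-- Starting at cell `a` and following the left/right pointers of `x` as prescribed by the
list `p` of moves (`false` = left pointer, `true` = right pointer); returns `none` if a
null pointer is encountered. -/
def followPath {n m : ℕ} {β : Type} (x : Fin n × Fin m → PSym n m β)
    (a : Fin n × Fin m) (p : List Bool) : Option (Fin n × Fin m) :=
  p.foldl (fun acc b => acc.bind fun c => if b then (x c).rp else (x c).lp) (some a)

/-- The conditions for `x` to be a 1-input of `f_{n,m}`, with marked column `b` and special
element `a`: (1) `b` is the unique all-1 column; (2) `a` is the unique cell of column `b`
with `x_a ≠ (1,⊥,⊥,⊥)`; (3) for every column `j ≠ b` the tree path from `a` to the leaf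
labeled `j` exists, and ends at a cell `ℓ_j` of column `j` holding a 0; (4) the back pointer
of each `ℓ_j` points to the column `b`. -/
def fCond (n m : ℕ) (x : Fin n × Fin m → PSym n m (Fin m))
    (b : Fin m) (a : Fin n × Fin m) : Prop :=
  (∀ j : Fin m, (∀ i : Fin n, (x (i, j)).val = true) ↔ j = b) ∧
  a.2 = b ∧
  (∀ i : Fin n, x (i, b) ≠ PSym.one n m (Fin m) ↔ (i, b) = a) ∧
  ∀ j : Fin m, j ≠ b →
    ∃ ℓ : Fin n × Fin m, followPath x a (treePath m j.1) = some ℓ ∧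
      ℓ.2 = j ∧ (x ℓ).val = false ∧ (x ℓ).bp = some b

/-- The pointer function `f_{n,m}`, with back pointers to the marked column. -/
noncomputable def fFun (n m : ℕ) (x : Fin n × Fin m → PSym n m (Fin m)) : Bool :=
  if ∃ b a, fCond n m x b a then true else false

/-- The conditions for `x` to be a 1-input of `g_{n,m}`, with marked column `b` and special
element `a`: (1)–(3) as for `f_{n,m}`, and (4′) the set of columns `j ≠ b` whose highlighted
zero `ℓ_j` has back pointer to `a` has size exactly `m/2`. -/
def gCond (n m : ℕ) (x : Fin n × Fin m → PSym n m (Fin n × Fin m))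
    (b : Fin m) (a : Fin n × Fin m) : Prop :=
  (∀ j : Fin m, (∀ i : Fin n, (x (i, j)).val = true) ↔ j = b) ∧
  a.2 = b ∧
  (∀ i : Fin n, x (i, b) ≠ PSym.one n m (Fin n × Fin m) ↔ (i, b) = a) ∧
  (∀ j : Fin m, j ≠ b →
    ∃ ℓ : Fin n × Fin m, followPath x a (treePath m j.1) = some ℓ ∧
      ℓ.2 = j ∧ (x ℓ).val = false) ∧
  {j : Fin m | j ≠ b ∧ ∃ ℓ : Fin n × Fin m,
      followPath x a (treePath m j.1) = some ℓ ∧ (x ℓ).bp = some a}.ncard = m / 2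

/-- The pointer function `g_{n,m}`, where exactly `m/2` of the highlighted zeroes point
back to the special element. -/
noncomputable def gFun (n m : ℕ) (x : Fin n × Fin m → PSym n m (Fin n × Fin m)) : Bool :=
  if ∃ b a, gCond n m x b a then true else false

/-- Column `j` is good in `x` (for `g_{n,m}`): `x` is a 1-input with marked column `b ≠ j`
and special element `a`, and the highlighted zero of column `j` points back to `a`. -/
def goodColumn (n m : ℕ) (x : Fin n × Fin m → PSym n m (Fin n × Fin m)) (j : Fin m) : Prop :=
  ∃ b a, gCond n m x b a ∧ j ≠ b ∧
    ∃ ℓ : Fin n × Fin m, followPath x a (treePath m j.1) = some ℓ ∧ (x ℓ).bp = some a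

/-- The conditions for `x` to be a 1-input of `h_{k,n,m}`, with marked columns `b 0,…,b (k-1)`
and special elements `a 0,…,a (k-1)`: (1) the `b s` are exactly the all-1 columns; (2) `a s` is
the unique cell of column `b s` with `x_{a s} ≠ (1,⊥,⊥,⊥)`; (3) the internal pointers of the
`a s` form a cycle and all the `a s` have equal left pointers and equal right pointers;
(4) for every non-marked column `j` the tree path from any `a s` to the leaf labeled `j`
exists and ends at a cell `ℓ_j` of column `j` holding a 0. -/
def hCond (k n m : ℕ) (x : Fin n × Fin m → PSym n m (Fin n × Fin m))
    (b : Fin k → Fin m) (a : Fin k → Fin n × Fin m) : Prop :=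
  Function.Injective b ∧
  (∀ j : Fin m, (∀ i : Fin n, (x (i, j)).val = true) ↔ ∃ s, b s = j) ∧
  (∀ s, (a s).2 = b s) ∧
  (∀ s, ∀ i : Fin n, x (i, b s) ≠ PSym.one n m (Fin n × Fin m) ↔ (i, b s) = a s) ∧
  (∀ s : Fin k, (x (a s)).bp = some (a ⟨(s.1 + 1) % k, Nat.mod_lt _ s.pos⟩)) ∧
  (∀ s t : Fin k, (x (a s)).lp = (x (a t)).lp ∧ (x (a s)).rp = (x (a t)).rp) ∧
  ∀ j : Fin m, (∀ s, b s ≠ j) → ∀ s : Fin k,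
    ∃ ℓ : Fin n × Fin m, followPath x (a s) (treePath m j.1) = some ℓ ∧
      ℓ.2 = j ∧ (x ℓ).val = false

/-- The pointer function `h_{k,n,m}` with `k` marked columns and no back pointers. -/
noncomputable def hFun (k n m : ℕ) (x : Fin n × Fin m → PSym n m (Fin n × Fin m)) : Bool :=
  if ∃ b a, hCond k n m x b a then true else false

/-- The hard input `x^ℓ`: cell `(i,j)` holds `(0,⊥,⊥,⊥)` if `i = ℓ j` and `(1,⊥,⊥,⊥)`
otherwise. -/
def xhard (n m : ℕ) (β : Type) (ℓ : Fin m → Fin n) : Fin n × Fin m → PSym n m β :=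
  fun c => if c.1 = ℓ c.2 then PSym.zero n m β else PSym.one n m β

/-- The set of (distinct) cells queried among the first `t` queries of `T` on input `x`. -/
def queriedUpTo {ι σ : Type} [DecidableEq ι] (T : DTree ι σ) (x : ι → σ) (t : ℕ) :
    Finset ι :=
  ((T.queryList x).take t).toFinset
/-! ### The progress measure for the hard distribution `x^ℓ` -/

/-- Column `j` is compromised (for the input `x^ℓ`), given the set `Q` of queried cells:
the zero cell `(ℓ j, j)` has been queried, or more than `n/2` cells of column `j` have been
queried. -/
def compromisedCol (n m : ℕ) (ℓ : Fin m → Fin n) (Q : Finset (Fin n × Fin m))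
    (j : Fin m) : Prop :=
  (ℓ j, j) ∈ Q ∨ n < 2 * (Q.filter fun c => c.2 = j).card

/-- The progress measure `I_t = A_t + (2/n)·B_t` of the decision tree `T` on the input `x^ℓ`
after `t` queries, where `A_t` is the number of compromised columns and `B_t` is the number
of queried cells lying outside compromised columns. -/
noncomputable def Imeasure (n m : ℕ)
    (T : DTree (Fin n × Fin m) (PSym n m (Fin n × Fin m))) (ℓ : Fin m → Fin n) (t : ℕ) : ℝ :=
  ({j : Fin m |
      compromisedCol n m ℓ (queriedUpTo T (xhard n m (Fin n × Fin m) ℓ) t) j}.ncard : ℝ) +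
    (2 / n) * ({c : Fin n × Fin m | c ∈ queriedUpTo T (xhard n m (Fin n × Fin m) ℓ) t ∧
      ¬ compromisedCol n m ℓ (queriedUpTo T (xhard n m (Fin n × Fin m) ℓ) t) c.2}.ncard : ℝ)
/-! ### The balanced binary tree, via root-to-node paths -/

/-- The node set of the balanced binary tree with `m` leaves: each node is identified with
the left/right path from the root to it, so the nodes are exactly the prefixes of the
root-to-leaf paths. -/
def treeNodes (m : ℕ) : Finset (List Bool) :=
  (Finset.range m).biUnion fun j => (treePath m j).inits.toFinset

/-- The leaves of the balanced binary tree with `m` leaves. -/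
def leafNodes (m : ℕ) : Finset (List Bool) :=
  (Finset.range m).image fun j => treePath m j

/-- The internal nodes of the balanced binary tree with `m` leaves. -/
def internalNodes (m : ℕ) : Finset (List Bool) :=
  treeNodes m \ leafNodes m

/-- The subtree rooted at a node `u`: all nodes of which `u` is a prefix. -/
def subtreeOf (m : ℕ) (u : List Bool) : Finset (List Bool) :=
  (treeNodes m).filter fun w => u <+: w

/-! ### The hard distribution for `h_{1,n,m}` -/

/-- A parameter quadruple `(v, π, ℓᴸ, ℓᴺ)` for the hard distribution: a bit `v`, a map `π`
from internal tree nodes to columns, and row maps `ℓᴸ, ℓᴺ` for leaves resp. internal nodes. -/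
abbrev HardQ (n m : ℕ) : Type :=
  Bool × ({u : List Bool // u ∈ internalNodes m} → Fin m) × (Fin m → Fin n) × (Fin m → Fin n)

/-- The valid parameter quadruples: `π` injective and `ℓᴸ j ≠ ℓᴺ j` for all `j`. -/
noncomputable def hardSet (n m : ℕ) : Finset (HardQ n m) :=
  Finset.univ.filter fun q => Function.Injective q.2.1 ∧ ∀ j, q.2.2.1 j ≠ q.2.2.2 j

/-- The column of the root of the tree (`none` if the tree has no internal node). -/
noncomputable def rootCol (n m : ℕ) (q : HardQ n m) : Option (Fin m) :=
  if h : ([] : List Bool) ∈ internalNodes m then some (q.2.1 ⟨[], h⟩) else none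

/-- The cell where a child node `w` of an internal node is placed: internal nodes go to
cell `(ℓᴺ (π w), π w)`, the leaf labeled `j` goes to cell `(ℓᴸ j, j)`, and the removed leaf
(the one labeled by the root's column) yields a null pointer. -/
noncomputable def childCell (n m : ℕ) (q : HardQ n m) (w : List Bool) :
    Option (Fin n × Fin m) :=
  if h : w ∈ internalNodes m then some (q.2.2.2 (q.2.1 ⟨w, h⟩), q.2.1 ⟨w, h⟩)
  else if h2 : ∃ j : Fin m, w = treePath m j.1 ∧ some j ≠ rootCol n m q then
    some (q.2.2.1 (Classical.choose h2), Classical.choose h2)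
  else none

/-- The input of the hard distribution determined by the parameter quadruple `q`:
the internal node `u` of the tree is placed at cell `(ℓᴺ (π u), π u)` with left and right
pointers to the cells of its children, value `v` and a self-loop internal pointer if `u` is
the root, and value 0 otherwise; for `j ≠ π(root)`, the leaf labeled `j` is placed at cell
`(ℓᴸ j, j)` with value 0 and null pointers; all the remaining cells hold `(1,⊥,⊥,⊥)`. -/
noncomputable def hardInput (n m : ℕ) (q : HardQ n m) :
    Fin n × Fin m → PSym n m (Fin n × Fin m) :=
  fun c =>
    if h : ∃ u : {u : List Bool // u ∈ internalNodes m}, q.2.1 u = c.2 ∧ q.2.2.2 c.2 = c.1 then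
      { val := if (Classical.choose h).1 = [] then q.1 else false
        lp := childCell n m q ((Classical.choose h).1 ++ [false])
        rp := childCell n m q ((Classical.choose h).1 ++ [true])
        bp := if (Classical.choose h).1 = [] then some c else none }
    else if some c.2 ≠ rootCol n m q ∧ c.1 = q.2.2.1 c.2 then PSym.zero n m (Fin n × Fin m)
    else PSym.one n m (Fin n × Fin m)

/-- Column `j` directly satisfies (i) or (ii): one of the cells `(ℓᴸ j, j)`, `(ℓᴺ j, j)` has
been queried, or more than half of the cells of column `j` have been queried. -/
def colBad (n m : ℕ) (q : HardQ n m) (Q : Finset (Fin n × Fin m)) (j : Fin m) : Prop :=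
  (q.2.2.1 j, j) ∈ Q ∨ (q.2.2.2 j, j) ∈ Q ∨ n < 2 * (Q.filter fun c => c.2 = j).card

/-- Column `j` is compromised: it satisfies (i) or (ii), or some ancestor `u` of `π⁻¹(j)`
in the tree is such that column `π u` satisfies (i) or (ii). -/
def compromisedCol19 (n m : ℕ) (q : HardQ n m) (Q : Finset (Fin n × Fin m))
    (j : Fin m) : Prop :=
  colBad n m q Q j ∨
  ∃ w u : {u : List Bool // u ∈ internalNodes m}, q.2.1 w = j ∧
    u.1 <+: w.1 ∧ u.1 ≠ w.1 ∧ colBad n m q Q (q.2.1 u)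

/-- The progress measure `I_t = min{A_t + (4·C0·log₂ m / n)·B_t, m/2}` of the decision tree
`D` on the hard-distribution input given by `q` after `t` queries, where `A_t` is the number
of compromised columns and `B_t` the number of queried cells outside compromised columns. -/
noncomputable def Imeasure19 (n m : ℕ) (C0 : ℝ)
    (D : DTree (Fin n × Fin m) (PSym n m (Fin n × Fin m))) (q : HardQ n m) (t : ℕ) : ℝ :=
  min
    (({j : Fin m | compromisedCol19 n m q (queriedUpTo D (hardInput n m q) t) j}.ncard : ℝ) +
      (4 * C0 * Real.logb 2 m / n) *
        ({c : Fin n × Fin m | c ∈ queriedUpTo D (hardInput n m q) t ∧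
          ¬ compromisedCol19 n m q (queriedUpTo D (hardInput n m q) t) c.2}.ncard : ℝ))
    (m / 2)

/-!
Fix a candidate marked column `b` and special row `r`. Then `x` is a 1-input of `h_{1,n,m}`
certified by `(b, r)` iff `n + m` local constraints hold: one for each cell of column `b`, and
one for each other column `j`, saying that the tree path from `(r, b)` to the leaf `j` ends at
a `0` in column `j`. Each constraint reads at most `⌊log₂ m⌋ + 2` cells one after the other,
so it is computed exactly by a polynomial of degree `O(log m · log |Σ|)` in the input bits,
and their sum counts the satisfied constraints. A rescaled Chebyshev polynomial of degree
`O(√(n + m) log (nm))` sends the count `n + m` to `1` and every smaller count to within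
`1 / (10 nm)` of `0`. At most one candidate certifies `x`, so summing over the `nm` candidates
approximates `h̃_{1,n,m}` to within `1/10`.
-/

theorem sum_ite_one_zero_of_subsingleton {κ : Type*} [Fintype κ] {P : κ → Prop}
    [DecidablePred P] [Decidable (∃ k, P k)] (hP : {k | P k}.Subsingleton) :
    (∑ k, if P k then (1 : ℝ) else 0) = if ∃ k, P k then 1 else 0 := by
  by_cases h : ∃ k, P k
  · obtain ⟨k, hk⟩ := h
    rw [if_pos ⟨k, hk⟩, Finset.sum_eq_single k ?_ (by simp), if_pos hk]
    exact fun k' _ hk' => if_neg fun h' => hk' (hP h' hk)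
  · push Not at h
    simp [h]

section ExactDegree

variable {ι : Type*}

def ExactDegreeLE (F : (ι → Bool) → Prop) (d : ℕ) : Prop :=
  ∃ p : MvPolynomial ι ℝ, p.totalDegree ≤ d ∧
    ∀ y : ι → Bool,
      MvPolynomial.eval (fun i => if y i then (1 : ℝ) else 0) p = if F y then 1 else 0

namespace ExactDegreeLE

variable {F G : (ι → Bool) → Prop} {d e : ℕ}

theorem mono (h : ExactDegreeLE F d) (hde : d ≤ e) : ExactDegreeLE F e :=
  let ⟨p, hp, hev⟩ := h
  ⟨p, hp.trans hde, hev⟩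

theorem congr (h : ExactDegreeLE F d) (hFG : ∀ y, F y ↔ G y) : ExactDegreeLE G d := by
  obtain ⟨p, hp, hev⟩ := h
  exact ⟨p, hp, fun y => by rw [hev, if_congr (hFG y) rfl rfl]⟩

theorem const (P : Prop) : ExactDegreeLE (fun _ : ι → Bool => P) 0 :=
  ⟨MvPolynomial.C (if P then 1 else 0), by split_ifs <;> simp, fun _ => by simp⟩

theorem and (hF : ExactDegreeLE F d) (hG : ExactDegreeLE G e) :
    ExactDegreeLE (fun y => F y ∧ G y) (d + e) := by
  obtain ⟨p, hp, hpev⟩ := hF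
  obtain ⟨q, hq, hqev⟩ := hG
  refine ⟨p * q, (MvPolynomial.totalDegree_mul p q).trans (add_le_add hp hq), fun y => ?_⟩
  simp only [map_mul, hpev, hqev, ite_zero_mul_ite_zero, one_mul]
  congr

theorem exists_of_subsingleton {κ : Type*} [Fintype κ] {F : κ → (ι → Bool) → Prop}
    (hF : ∀ k, ExactDegreeLE (F k) d) (huniq : ∀ y, {k | F k y}.Subsingleton) :
    ExactDegreeLE (fun y => ∃ k, F k y) d := by
  choose p hp hpev using hF
  refine ⟨∑ k, p k, MvPolynomial.totalDegree_finsetSum_le fun k _ => hp k, fun y => ?_⟩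
  simp only [map_sum, hpev]
  convert sum_ite_one_zero_of_subsingleton (huniq y)

theorem forall_eq {τ : Type*} [Fintype τ] (g : τ → ι) (w : τ → Bool) :
    ExactDegreeLE (fun y => ∀ t, y (g t) = w t) (Fintype.card τ) := by
  open MvPolynomial in
  refine ⟨∏ t, if w t then X (g t) else 1 - X (g t), ?_, fun y => ?_⟩
  · refine (totalDegree_finsetProd _ _).trans ?_
    calc _ ≤ ∑ _t : τ, 1 := Finset.sum_le_sum fun t _ => ?_
      _ = Fintype.card τ := by simp
    split_ifs
    · exact (totalDegree_X _).le
    · exact (totalDegree_sub _ _).trans (by simp [totalDegree_X])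
  · calc _ = ∏ t, if y (g t) = w t then (1 : ℝ) else 0 := by
          rw [map_prod]
          refine Finset.prod_congr rfl fun t _ => ?_
          cases w t <;> cases h : y (g t) <;> simp [h]
      _ = _ := by rw [Fintype.prod_boole]; congr

theorem comp {τ : Type*} [Fintype τ] (g : τ → ι) (φ : (τ → Bool) → Prop) :
    ExactDegreeLE (fun y => φ (y ∘ g)) (Fintype.card τ) := by
  have h := exists_of_subsingleton (fun w => (const (φ w)).and (forall_eq g w))
    fun y w₁ h₁ w₂ h₂ => funext fun t => (h₁.2 t).symm.trans (h₂.2 t)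
  refine (h.congr fun y => ⟨?_, fun hy => ⟨y ∘ g, hy, fun _ => rfl⟩⟩).mono (zero_add _).le
  rintro ⟨w, hw, hyw⟩
  rwa [show y ∘ g = w from funext hyw]

end ExactDegreeLE

end ExactDegree

section BlockEncoding

variable {ι σ : Type*} {L : ℕ} (β : (Fin L → Bool) → σ)

def blockDecode (y : ι × Fin L → Bool) : ι → σ := fun c => β fun s => y (c, s)

theorem exactDegreeLE_blockDecode (c : ι) (φ : σ → Prop) :
    ExactDegreeLE (fun y => φ (blockDecode β y c)) L :=
  (ExactDegreeLE.comp (fun s : Fin L => (c, s)) (fun w => φ (β w))).mono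
    (Fintype.card_fin L).le

end BlockEncoding

section FollowPath

variable {n m : ℕ} {γ : Type}

theorem followPath_nil (x : Fin n × Fin m → PSym n m γ) (a : Fin n × Fin m) :
    followPath x a [] = some a :=
  rfl

theorem followPath_cons (x : Fin n × Fin m → PSym n m γ) (a : Fin n × Fin m) (b : Bool)
    (p : List Bool) :
    followPath x a (b :: p) =
      (if b then (x a).rp else (x a).lp).bind fun c => followPath x c p := by
  suffices ∀ (o : Option (Fin n × Fin m)) (p : List Bool),
      p.foldl (fun acc b => acc.bind fun c => if b then (x c).rp else (x c).lp) o =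
        o.bind fun c => followPath x c p from this _ p
  intro o p
  induction p generalizing o with
  | nil => cases o <;> rfl
  | cons b' p ih =>
    rw [List.foldl_cons, ih]
    cases o with
    | none => rfl
    | some c =>
      change _ = List.foldl _ _ (b' :: p)
      rw [List.foldl_cons, ih]

variable {L : ℕ} (β : (Fin L → Bool) → PSym n m γ)

theorem exactDegreeLE_followPath (Q : Fin n × Fin m → PSym n m γ → Prop) (p : List Bool)
    (a : Fin n × Fin m) :
    ExactDegreeLE (fun y => ∃ ℓ, followPath (blockDecode β y) a p = some ℓ ∧
      Q ℓ (blockDecode β y ℓ)) ((p.length + 1) * L) := by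
  induction p generalizing a with
  | nil =>
    refine ((exactDegreeLE_blockDecode β a (Q a)).congr fun y => ?_).mono (by simp)
    simp [followPath_nil]
  | cons b p ih =>
    have h := ExactDegreeLE.exists_of_subsingleton
      (fun c => (exactDegreeLE_blockDecode β a
        (fun v => (if b then v.rp else v.lp) = some c)).and (ih c))
      fun y c₁ h₁ c₂ h₂ => Option.some_injective _ (h₁.1.symm.trans h₂.1)
    refine (h.congr fun y => ?_).mono (le_of_eq (by rw [List.length_cons]; ring))
    simp only [followPath_cons, Option.bind_eq_some_iff]
    constructor
    · rintro ⟨c, hc, ℓ, hℓ, hQ⟩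
      exact ⟨ℓ, ⟨c, hc, hℓ⟩, hQ⟩
    · rintro ⟨ℓ, ⟨c, hc, hℓ⟩, hQ⟩
      exact ⟨c, hc, ℓ, hℓ, hQ⟩

end FollowPath

section Chebyshev

open Polynomial Polynomial.Chebyshev

/-- The polynomial is `T_d (t / (K - 1)) / T_d (K / (K - 1))`: `T_d` is bounded by `1` on
`[-1, 1]` and grows like `exp (d · arcosh z)` at `z > 1`. -/
theorem exists_poly_eq_one_abs_le_of_lt (K : ℕ) (hK : 2 ≤ K) {ε : ℝ} (hε0 : 0 < ε)
    (hε1 : ε ≤ 1) :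
    ∃ q : ℝ[X], (q.natDegree : ℝ) ≤ √K * Real.log (2 / ε) + 1 ∧
      q.eval (K : ℝ) = 1 ∧ ∀ t : ℕ, t < K → |q.eval (t : ℝ)| ≤ ε := by
  have hK1 : (1 : ℝ) < K := by exact_mod_cast hK
  have hlog : 0 ≤ Real.log (2 / ε) := Real.log_nonneg (by rw [le_div_iff₀ hε0]; linarith)
  set c : ℝ := ((K : ℝ) - 1)⁻¹
  have hc : 0 < c := inv_pos.2 (by linarith)
  set z : ℝ := c * K
  have hz : 1 ≤ z := by
    rw [show z = K / (K - 1) by simp only [z, c]; ring, one_le_div (by linarith)]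
    linarith
  set θ := Real.arcosh z
  set d : ℕ := ⌈√K * Real.log (2 / ε)⌉₊
  -- `z ≤ exp (θ² / 2)` and `log z ≥ 1 - z⁻¹ = 1 / K` give `θ² K ≥ 2`.
  have hθ : 1 ≤ θ * √K := by
    have h1 : Real.log z ≤ θ ^ 2 / 2 := by
      rw [Real.log_le_iff_le_exp (by linarith), ← Real.cosh_arcosh hz]
      exact Real.cosh_le_exp_half_sq θ
    have h2 : 1 - z⁻¹ = (K : ℝ)⁻¹ := by
      simp only [z, c]; field_simp; ring
    have h3 := Real.one_sub_inv_le_log_of_pos (by linarith : 0 < z)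
    have h4 : 1 ≤ (θ * √K) ^ 2 := by
      rw [mul_pow, Real.sq_sqrt (by linarith)]
      have : (K : ℝ)⁻¹ * K = 1 := inv_mul_cancel₀ (by linarith)
      nlinarith
    nlinarith [mul_nonneg (Real.arcosh_nonneg hz) (Real.sqrt_nonneg K)]
  have hM : 1 / ε ≤ (T ℝ d).eval z := by
    have hd : Real.log (2 / ε) ≤ d * θ := by
      calc Real.log (2 / ε) ≤ √K * Real.log (2 / ε) * θ := by nlinarith
        _ ≤ d * θ := by gcongr; exacts [Real.arcosh_nonneg hz, Nat.le_ceil _]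
    rw [← Real.cosh_arcosh hz, T_real_cosh, Real.cosh_eq]
    have := Real.exp_le_exp.2 hd
    rw [Real.exp_log (by positivity)] at this
    have hhalf : 1 / ε = 2 / ε / 2 := by ring
    push_cast
    linarith [Real.exp_pos (-(d * θ))]
  have hMpos : 0 < (T ℝ d).eval z := lt_of_lt_of_le (by positivity) hM
  refine ⟨C ((T ℝ d).eval z)⁻¹ * (T ℝ d).comp (C c * X), ?_, ?_, fun t ht => ?_⟩
  · have hdeg : (C ((T ℝ d).eval z)⁻¹ * (T ℝ d).comp (C c * X)).natDegree ≤ d := by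
      refine (natDegree_C_mul_le _ _).trans (natDegree_comp_le.trans ?_)
      rw [natDegree_T, natDegree_C_mul_X _ hc.ne']
      simp
    calc _ ≤ (d : ℝ) := by exact_mod_cast hdeg
      _ ≤ _ := (Nat.ceil_lt_add_one (by positivity)).le
  · simp only [eval_mul, eval_C, eval_comp, eval_X]
    exact inv_mul_cancel₀ hMpos.ne'
  · have hct : |c * t| ≤ 1 := by
      have : (t : ℝ) ≤ K - 1 := by
        have : (t : ℝ) + 1 ≤ K := by exact_mod_cast ht
        linarith
      rw [abs_of_nonneg (by positivity), ← inv_mul_cancel₀ (sub_pos.2 hK1).ne']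
      gcongr
    simp only [eval_mul, eval_C, eval_comp, eval_X, abs_mul, abs_inv, abs_of_pos hMpos]
    calc _ ≤ ((T ℝ d).eval z)⁻¹ * 1 := by gcongr; exact abs_eval_T_real_le_one _ hct
      _ ≤ ε := by rw [mul_one]; exact inv_le_of_inv_le₀ hε0 (by simpa using hM)

end Chebyshev

section Approximation

open MvPolynomial

variable {ι : Type*}

theorem totalDegree_polynomial_aeval_le (q : Polynomial ℝ) (g : MvPolynomial ι ℝ) :
    (Polynomial.aeval g q).totalDegree ≤ q.natDegree * g.totalDegree := by
  rw [Polynomial.aeval_eq_sum_range]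
  refine totalDegree_finsetSum_le fun i hi => (totalDegree_smul_le _ _).trans ?_
  exact (totalDegree_pow _ _).trans
    (Nat.mul_le_mul_right _ (Nat.lt_succ_iff.1 (Finset.mem_range.1 hi)))

theorem eval_polynomial_aeval (v : ι → ℝ) (q : Polynomial ℝ) (g : MvPolynomial ι ℝ) :
    eval v (Polynomial.aeval g q) = q.eval (eval v g) :=
  (Polynomial.aeval_algHom_apply (MvPolynomial.aeval v) g q).symm

theorem ExactDegreeLE.exists_approx_exists_forall {κ τ : Type*} [Fintype κ] [Fintype τ]
    {F : κ → τ → (ι → Bool) → Prop} {W : ℕ} (hF : ∀ k t, ExactDegreeLE (F k t) W)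
    (huniq : ∀ y, {k | ∀ t, F k t y}.Subsingleton) (hτ : 2 ≤ Fintype.card τ)
    {ε : ℝ} (hε0 : 0 < ε) (hε1 : ε ≤ 1) :
    ∃ p : MvPolynomial ι ℝ,
      (p.totalDegree : ℝ) ≤ (√(Fintype.card τ) * Real.log (2 / ε) + 1) * W ∧
      ∀ y : ι → Bool, |eval (fun i => if y i then (1 : ℝ) else 0) p -
        if ∃ k, ∀ t, F k t y then 1 else 0| ≤ Fintype.card κ * ε := by
  obtain ⟨q, hqdeg, hqK, hqlt⟩ := exists_poly_eq_one_abs_le_of_lt _ hτ hε0 hε1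
  choose p hp hpev using hF
  have hcount : ∀ k y, eval (fun i => if y i then (1 : ℝ) else 0) (∑ t, p k t) =
      (Finset.univ.filter fun t => F k t y).card := by
    intro k y
    simp only [map_sum, hpev, Finset.sum_boole]
  have hterm : ∀ k y, |q.eval ((Finset.univ.filter fun t => F k t y).card : ℝ) -
      if ∀ t, F k t y then 1 else 0| ≤ ε := by
    intro k y
    by_cases h : ∀ t, F k t y
    · rw [Finset.filter_true_of_mem fun t _ => h t, Finset.card_univ, hqK, if_pos h]
      simpa using hε0.le
    · rw [if_neg h, sub_zero]
      refine hqlt _ (Finset.card_lt_univ_of_notMem (x := (not_forall.1 h).choose) ?_)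
      simpa using (not_forall.1 h).choose_spec
  refine ⟨∑ k, Polynomial.aeval (∑ t, p k t) q, ?_, fun y => ?_⟩
  · have hdeg : (∑ k, Polynomial.aeval (∑ t, p k t) q).totalDegree ≤ q.natDegree * W :=
      totalDegree_finsetSum_le fun k _ => (totalDegree_polynomial_aeval_le _ _).trans
        (Nat.mul_le_mul_left _ (totalDegree_finsetSum_le fun t _ => hp k t))
    calc _ ≤ (q.natDegree : ℝ) * W := by exact_mod_cast hdeg
      _ ≤ _ := by gcongr
  · rw [← sum_ite_one_zero_of_subsingleton (huniq y), map_sum, ← Finset.sum_sub_distrib]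
    calc _ ≤ ∑ k : κ, ε := (Finset.abs_sum_le_sum_abs _ _).trans
          (Finset.sum_le_sum fun k _ => by rw [eval_polynomial_aeval, hcount]; exact hterm k y)
      _ = _ := by simp

end Approximation

section OneCertificate

variable {n m : ℕ}

def MarkedCellCond (b : Fin m) (r i : Fin n) (v : PSym n m (Fin n × Fin m)) : Prop :=
  if i = r then v.val = true ∧ v.bp = some (r, b) else v = PSym.one n m (Fin n × Fin m)

def LeafCond (x : Fin n × Fin m → PSym n m (Fin n × Fin m)) (b : Fin m) (r : Fin n)
    (j : Fin m) : Prop :=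
  j = b ∨ ∃ ℓ, followPath x (r, b) (treePath m j) = some ℓ ∧ ℓ.2 = j ∧ (x ℓ).val = false

/-- `x` is a 1-input of `h_{1,n,m}` with marked column `b` and special element `(r, b)`. -/
def IsOneCertificate (x : Fin n × Fin m → PSym n m (Fin n × Fin m)) (b : Fin m)
    (r : Fin n) : Prop :=
  (∀ i, MarkedCellCond b r i (x (i, b))) ∧ ∀ j, LeafCond x b r j

namespace IsOneCertificate

variable {x : Fin n × Fin m → PSym n m (Fin n × Fin m)} {b b' : Fin m} {r r' : Fin n}

theorem val_eq_true (h : IsOneCertificate x b r) (i : Fin n) : (x (i, b)).val = true := by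
  have := h.1 i
  unfold MarkedCellCond at this
  split_ifs at this
  · exact this.1
  · rw [this]; rfl

theorem bp_eq (h : IsOneCertificate x b r) : (x (r, b)).bp = some (r, b) := by
  have := h.1 r
  rw [MarkedCellCond, if_pos rfl] at this
  exact this.2

theorem eq_one_iff (h : IsOneCertificate x b r) (i : Fin n) :
    x (i, b) = PSym.one n m (Fin n × Fin m) ↔ i ≠ r := by
  refine ⟨?_, fun hi => by simpa [MarkedCellCond, hi] using h.1 i⟩
  rintro hone rfl
  simpa [hone, PSym.one] using h.bp_eq

theorem exists_val_eq_false (h : IsOneCertificate x b r) {j : Fin m} (hj : j ≠ b) :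
    ∃ i, (x (i, j)).val = false := by
  obtain ⟨ℓ, -, rfl, hℓ⟩ := (h.2 j).resolve_left hj
  exact ⟨ℓ.1, hℓ⟩

theorem unique (h : IsOneCertificate x b r) (h' : IsOneCertificate x b' r') :
    b = b' ∧ r = r' := by
  have hb : b = b' := by
    by_contra hne
    obtain ⟨i, hi⟩ := h'.exists_val_eq_false hne
    simp [h.val_eq_true i] at hi
  subst hb
  exact ⟨rfl, not_not.1 fun hne => (h'.eq_one_iff r').1 ((h.eq_one_iff r').2 (Ne.symm hne)) rfl⟩

end IsOneCertificate

theorem hCond_one_iff (x : Fin n × Fin m → PSym n m (Fin n × Fin m)) (b : Fin m) (r : Fin n) :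
    hCond 1 n m x (fun _ => b) (fun _ => (r, b)) ↔ IsOneCertificate x b r := by
  simp only [hCond, exists_const, forall_const, and_self, Prod.mk.injEq, and_true, true_and]
  constructor
  · rintro ⟨-, hcol, hone, hbp, hpath⟩
    refine ⟨fun i => ?_, fun j => ?_⟩
    · unfold MarkedCellCond
      split_ifs with hi
      · exact ⟨(hcol b).2 rfl i, hi ▸ hbp⟩
      · exact not_not.1 fun hne => hi ((hone i).1 hne)
    · by_cases hj : j = b
      · exact Or.inl hj
      · exact Or.inr (hpath j (Ne.symm hj))
  · intro h
    refine ⟨fun _ _ _ => Subsingleton.elim _ _, fun j => ⟨fun hj => ?_, ?_⟩,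
      fun i => by rw [Ne, h.eq_one_iff, not_not], h.bp_eq,
      fun j hj => (h.2 j).resolve_left (Ne.symm hj)⟩
    · by_contra hne
      obtain ⟨i, hi⟩ := h.exists_val_eq_false (Ne.symm hne)
      simp [hj i] at hi
    · rintro rfl
      exact h.val_eq_true

theorem hFun_one_eq_true_iff (x : Fin n × Fin m → PSym n m (Fin n × Fin m)) :
    hFun 1 n m x = true ↔ ∃ b r, IsOneCertificate x b r := by
  have hexists : (∃ bs as, hCond 1 n m x bs as) ↔ ∃ b r, IsOneCertificate x b r := by
    refine ⟨?_, fun ⟨b, r, h⟩ => ⟨_, _, (hCond_one_iff x b r).2 h⟩⟩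
    rintro ⟨bs, as, h⟩
    obtain ⟨b, rfl⟩ : ∃ b, bs = fun _ => b := ⟨bs 0, funext fun s => by rw [Subsingleton.elim s 0]⟩
    obtain ⟨r, rfl⟩ : ∃ r, as = fun _ => (r, b) :=
      ⟨(as 0).1, funext fun s => by rw [Subsingleton.elim s 0]; exact Prod.ext rfl (h.2.2.1 0)⟩
    exact ⟨b, r, (hCond_one_iff x b r).1 h⟩
  unfold hFun
  split_ifs with h <;> simp [← hexists, h]

end OneCertificate

section HOne

variable {n m L : ℕ} (β : (Fin L → Bool) → PSym n m (Fin n × Fin m))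

theorem length_treePath_le (m j : ℕ) : (treePath m j).length ≤ Nat.log 2 m + 1 := by
  have hbits : ∀ k j : ℕ, (bitsPath k j).length = k := by simp [bitsPath]
  unfold treePath
  split_ifs <;> simp [hbits]

theorem exactDegreeLE_leafCond (b : Fin m) (r : Fin n) (j : Fin m) :
    ExactDegreeLE (fun y => LeafCond (blockDecode β y) b r j) ((Nat.log 2 m + 2) * L) := by
  by_cases hj : j = b
  · exact ((ExactDegreeLE.const True).congr fun y => by simp [LeafCond, hj]).mono (Nat.zero_le _)
  · refine ((exactDegreeLE_followPath β (fun ℓ v => ℓ.2 = j ∧ v.val = false) (treePath m j)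
      (r, b)).congr fun y => by simp [LeafCond, hj]).mono ?_
    have := length_treePath_le m j
    exact Nat.mul_le_mul_right _ (by omega)

theorem exists_approx_hFun_one (hn : 0 < n) (hm : 0 < m) :
    ∃ p : MvPolynomial ((Fin n × Fin m) × Fin L) ℝ,
      (p.totalDegree : ℝ) ≤
        (√(n + m) * Real.log (20 * (n * m)) + 1) * ((Nat.log 2 m + 2) * L : ℕ) ∧
      ∀ y, |MvPolynomial.eval (fun i => if y i then (1 : ℝ) else 0) p -
        if hFun 1 n m (blockDecode β y) then 1 else 0| ≤ 1 / 10 := by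
  have hnm : (1 : ℝ) ≤ n * m := by exact_mod_cast Nat.mul_pos hn hm
  have hε1 : 1 / (10 * (n * m : ℝ)) ≤ 1 := by
    rw [div_le_one (by positivity)]
    linarith
  obtain ⟨p, hdeg, happrox⟩ := ExactDegreeLE.exists_approx_exists_forall
    (F := fun (k : Fin m × Fin n) (t : Fin n ⊕ Fin m) y =>
      Sum.elim (fun i => MarkedCellCond k.1 k.2 i (blockDecode β y (i, k.1)))
        (fun j => LeafCond (blockDecode β y) k.1 k.2 j) t)
    (W := (Nat.log 2 m + 2) * L)
    (fun k t => t.casesOn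
      (fun i => (exactDegreeLE_blockDecode β (i, k.1) (MarkedCellCond k.1 k.2 i)).mono
        (Nat.le_mul_of_pos_left L (Nat.succ_pos _)))
      (fun j => exactDegreeLE_leafCond β k.1 k.2 j))
    (fun y k hk k' hk' => by
      obtain ⟨hb, hr⟩ := IsOneCertificate.unique (Sum.forall.1 hk) (Sum.forall.1 hk')
      exact Prod.ext hb hr)
    (by rw [Fintype.card_sum, Fintype.card_fin, Fintype.card_fin]; omega) (by positivity) hε1
  have hτ : (Fintype.card (Fin n ⊕ Fin m) : ℝ) = n + m := by simp
  have h2ε : 2 / (1 / (10 * (n * m : ℝ))) = 20 * (n * m) := by field_simp; ring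
  have hκε : (Fintype.card (Fin m × Fin n) : ℝ) * (1 / (10 * (n * m))) = 1 / 10 := by
    simp only [Fintype.card_prod, Fintype.card_fin, Nat.cast_mul]
    field_simp
  refine ⟨p, by rwa [hτ, h2ε] at hdeg, fun y => ?_⟩
  rw [← hκε]
  convert happrox y using 3
  simp only [hFun_one_eq_true_iff, IsOneCertificate, Sum.forall, Prod.exists]
  rfl

end HOne

section Bounds

theorem card_pSym (n m : ℕ) (β : Type) [Fintype β] :
    Fintype.card (PSym n m β) = 2 * (n * m + 1) ^ 2 * (Fintype.card β + 1) := by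
  rw [Fintype.card_congr (PSym.equivProd n m β)]
  simp only [Fintype.card_prod, Fintype.card_bool, Fintype.card_option, Fintype.card_fin]
  ring

variable {n m : ℕ}

theorem clog_card_pSym_le :
    (Nat.clog 2 (Fintype.card (PSym n m (Fin n × Fin m))) : ℝ) ≤
      3 * Real.logb 2 (n * m) + 4 := by
  set t := Nat.log 2 (n * m)
  have hpow : n * m + 1 ≤ 2 ^ (t + 1) := Nat.lt_pow_succ_log_self (by norm_num) _
  have hclog : Nat.clog 2 (Fintype.card (PSym n m (Fin n × Fin m))) ≤ 3 * t + 4 := by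
    refine Nat.clog_le_of_le_pow ?_
    rw [card_pSym, Fintype.card_prod, Fintype.card_fin, Fintype.card_fin]
    calc 2 * (n * m + 1) ^ 2 * (n * m + 1) ≤ 2 * (2 ^ (t + 1)) ^ 2 * 2 ^ (t + 1) := by gcongr
      _ = 2 ^ (3 * t + 4) := by ring
  have ht : (t : ℝ) ≤ Real.logb 2 (n * m) := by exact_mod_cast Real.natLog_le_logb (n * m) 2
  calc _ ≤ ((3 * t + 4 : ℕ) : ℝ) := by exact_mod_cast hclog
    _ ≤ _ := by push_cast; linarith

theorem degree_bound_le_logb_pow_three (hn : 2 ≤ n) (hm : 2 ≤ m) :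
    (√(n + m) * Real.log (20 * (n * m)) + 1) *
        ((Nat.log 2 m + 2) * Nat.clog 2 (Fintype.card (PSym n m (Fin n × Fin m))) : ℕ) ≤
      50 * (√n + √m) * Real.logb 2 (n * m) ^ 3 := by
  have hn' : (2 : ℝ) ≤ n := by exact_mod_cast hn
  have hm' : (2 : ℝ) ≤ m := by exact_mod_cast hm
  have hnm : (4 : ℝ) ≤ n * m := by nlinarith
  set G := Real.logb 2 (n * m)
  set S := √n + √m
  have hG : 2 ≤ G := by
    rw [Real.le_logb_iff_rpow_le one_lt_two (by linarith)]
    exact (by norm_num : (2 : ℝ) ^ (2 : ℝ) = 4).trans_le hnm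
  have hS : 1 ≤ S := by
    have : 1 ≤ √n := Real.one_le_sqrt.2 (by linarith)
    linarith [Real.sqrt_nonneg m]
  have hsqrt : √(n + m) ≤ S := by
    rw [Real.sqrt_le_iff]
    refine ⟨by linarith, ?_⟩
    nlinarith [Real.sq_sqrt (n.cast_nonneg : (0 : ℝ) ≤ n),
      Real.sq_sqrt (m.cast_nonneg : (0 : ℝ) ≤ m), mul_nonneg (Real.sqrt_nonneg n) (Real.sqrt_nonneg m)]
  have hlog : Real.log (20 * (n * m)) ≤ 4 * G := by
    have h64 : (4 : ℝ) ^ 3 ≤ (n * m) ^ 3 := pow_le_pow_left₀ (by norm_num) hnm 3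
    have h20 : Real.log (20 * (n * m)) ≤ 4 * Real.log (n * m) :=
      calc _ ≤ Real.log ((n * m) ^ 4) := Real.log_le_log (by positivity) (by nlinarith)
        _ = _ := by rw [Real.log_pow]; norm_num
    have hG' : Real.log (n * m) ≤ G := by
      rw [show G = Real.log (n * m) / Real.log 2 from rfl, le_div_iff₀ (Real.log_pos one_lt_two)]
      nlinarith [Real.log_two_lt_d9, Real.log_nonneg (by linarith : (1 : ℝ) ≤ n * m)]
    linarith
  have hlogm : (Nat.log 2 m : ℝ) + 2 ≤ 2 * G := by
    have h1 : (Nat.log 2 m : ℝ) ≤ Real.logb 2 m := by exact_mod_cast Real.natLog_le_logb m 2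
    have h2 : Real.logb 2 m ≤ G := Real.logb_le_logb_of_le one_lt_two (by positivity) (by nlinarith)
    linarith
  have hclog := clog_card_pSym_le (n := n) (m := m)
  push_cast
  calc _ ≤ (S * (4 * G) + S * G) * ((2 * G) * (5 * G)) := by
        gcongr
        · exact Real.log_nonneg (by linarith)
        · nlinarith
        · linarith
    _ = _ := by ring

end Bounds

/-- The approximate degree of the booleanization of `h_{1,n,m}` is
`Õ(√n + √m)`. -/
theorem statement17 :
    ∃ C d : ℝ, 0 < C ∧ 0 < d ∧ ∀ n m : ℕ, 2 ≤ n → 2 ≤ m →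
      ∀ β : (Fin (Nat.clog 2 (Fintype.card (PSym n m (Fin n × Fin m)))) → Bool) →
          PSym n m (Fin n × Fin m),
        Function.Surjective β →
        (adeg (fun y : (Fin n × Fin m) ×
              Fin (Nat.clog 2 (Fintype.card (PSym n m (Fin n × Fin m)))) → Bool =>
            hFun 1 n m fun c => β fun s => y (c, s)) : ℝ) ≤
          C * (Real.sqrt n + Real.sqrt m) * Real.logb 2 ((n : ℝ) * m) ^ d := by
  refine ⟨50, 3, by norm_num, by norm_num, fun n m hn hm β _ => ?_⟩
  obtain ⟨p, hdeg, happrox⟩ := exists_approx_hFun_one β (by omega) (by omega)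
  have hadeg : adeg (fun y => hFun 1 n m fun c => β fun s => y (c, s)) ≤ p.totalDegree :=
    Nat.sInf_le ⟨p, le_rfl, happrox⟩
  rw [show (3 : ℝ) = (3 : ℕ) by norm_num, Real.rpow_natCast]
  calc _ ≤ (p.totalDegree : ℝ) := by exact_mod_cast hadeg
    _ ≤ _ := hdeg
    _ ≤ _ := degree_bound_le_logb_pow_three hn hm
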